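/- For n ≥ 2, the total number of essential elements in IC_n is (n−1)·2^{n−2}. -/

import Mathlib

/-! An essential element of `IC_n` is determined by its moved point `i + 1 ↦ i` and its set `F` of
fixed points, which can be any subset of `[n] \ {i, i + 1}`: it is the partial identity on
`F ∪ {i + 1}` followed by the transposition `(i i+1)`, and every such map is isotone and
order-decreasing. This gives `(n - 1) · 2 ^ (n - 2)` choices. -/

open scoped Classical

namespace ICCatalan

/-- Partial injective transformations on `Fin n` (representing the chain `[n] = {1,…,n}`). -/
abbrev PT (n : ℕ) := Fin n ≃. Fin n

/-- Composition (left-to-right, `x(αβ) = (xα)β`) makes `PT n` a monoid. -/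
noncomputable instance instMonoidPT (n : ℕ) : Monoid (PT n) where
  mul f g := f.trans g
  one := PEquiv.refl (Fin n)
  mul_assoc := PEquiv.trans_assoc
  one_mul := PEquiv.refl_trans
  mul_one := PEquiv.trans_refl

lemma mul_def {n : ℕ} (f g : PT n) : f * g = f.trans g := rfl

/-- The domain of a partial transformation. -/
def pdom {n : ℕ} (f : PT n) : Set (Fin n) := {x | ∃ y, f x = some y}

/-- The image of a partial transformation. -/
def pim {n : ℕ} (f : PT n) : Set (Fin n) := {y | ∃ x, f x = some y}

/-- The height `|im f|` of a partial transformation. -/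
noncomputable def height {n : ℕ} (f : PT n) : ℕ := (pim f).ncard

/-- `f` is order-decreasing: `xf ≤ x` on the domain. -/
def IsDecr {n : ℕ} (f : PT n) : Prop := ∀ x y : Fin n, f x = some y → y ≤ x

/-- `f` is isotone: `x ≤ y` implies `xf ≤ yf` on the domain. -/
def IsIso {n : ℕ} (f : PT n) : Prop :=
  ∀ x₁ x₂ y₁ y₂ : Fin n, f x₁ = some y₁ → f x₂ = some y₂ → x₁ ≤ x₂ → y₁ ≤ y₂

/-- The injective partial Catalan monoid `IC_n`: all isotone order-decreasing
partial injective transformations of `[n]`. -/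
def IC (n : ℕ) : Set (PT n) := {f | IsIso f ∧ IsDecr f}

/-- `Q'_n = {α ∈ IC_n : 1 ∉ dom α}` (the least element of `Fin n` plays the role of `1 ∈ [n]`). -/
def Qp (n : ℕ) : Set (PT n) := {f | f ∈ IC n ∧ ∀ x : Fin n, (x : ℕ) = 0 → f x = none}

/-- `S¹ : S` with an identity adjoined (realized inside `PT n`). -/
def SOne {n : ℕ} (S : Set (PT n)) : Set (PT n) := S ∪ {1}

/-- The starred Green relation `L*` of the subsemigroup `S`. -/
def LStar {n : ℕ} (S : Set (PT n)) (a b : PT n) : Prop :=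
  ∀ x ∈ SOne S, ∀ y ∈ SOne S, (a * x = a * y ↔ b * x = b * y)

/-- The starred Green relation `R*` of the subsemigroup `S`. -/
def RStar {n : ℕ} (S : Set (PT n)) (a b : PT n) : Prop :=
  ∀ x ∈ SOne S, ∀ y ∈ SOne S, (x * a = y * a ↔ x * b = y * b)

/-- The starred Green relation `H* = L* ∩ R*`. -/
def HStar {n : ℕ} (S : Set (PT n)) (a b : PT n) : Prop :=
  LStar S a b ∧ RStar S a b

/-- The partial identity on a subset `A` of `[n]`. -/
noncomputable def pid {n : ℕ} (A : Set (Fin n)) : PT n := PEquiv.ofSet A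

/-- An essential element: exactly one point `y` of the domain is moved, and `yf = y - 1`. -/
def IsEssential {n : ℕ} (f : PT n) : Prop :=
  ∃ y z : Fin n, f y = some z ∧ (z : ℕ) + 1 = (y : ℕ) ∧
    ∀ x w : Fin n, f x = some w → w ≠ x → x = y

/-- The shift of `f`: the number of non-fixed points of its domain. -/
noncomputable def shift {n : ℕ} (f : PT n) : ℕ := {x : Fin n | ∃ w, f x = some w ∧ w ≠ x}.ncard

end ICCatalan

namespace PEquiv

variable {ι : Type*} [DecidableEq ι]

def fixAndMove (F : Finset ι) (y z : ι) : ι ≃. ι :=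
  (ofSet (↑(insert y F) : Set ι)).trans (Equiv.swap y z).toPEquiv

variable {F : Finset ι} {x y z w : ι}

theorem fixAndMove_eq_some_iff (hz : z ∉ F) (hy : y ∉ F) :
    fixAndMove F y z x = some w ↔ (x = y ∧ w = z) ∨ (x ∈ F ∧ w = x) := by
  have hswap : ∀ x ∈ F, Equiv.swap y z x = x := fun x hx =>
    Equiv.swap_apply_of_ne_of_ne (ne_of_mem_of_not_mem hx hy) (ne_of_mem_of_not_mem hx hz)
  simp only [fixAndMove, trans_eq_some, ofSet_eq_some_iff, Equiv.toPEquiv_apply,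
    Option.some.injEq, Finset.coe_insert, Set.mem_insert_iff, Finset.mem_coe]
  constructor
  · rintro ⟨_, ⟨rfl, rfl | hx⟩, rfl⟩
    · simp
    · exact .inr ⟨hx, hswap _ hx⟩
  · rintro (⟨rfl, rfl⟩ | ⟨hx, rfl⟩)
    · simp
    · exact ⟨_, ⟨rfl, .inr hx⟩, hswap _ hx⟩

theorem fixAndMove_eq_some_self_iff (hzy : z ≠ y) (hz : z ∉ F) (hy : y ∉ F) :
    fixAndMove F y z x = some x ↔ x ∈ F := by
  rw [fixAndMove_eq_some_iff hz hy]
  grind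

end PEquiv

namespace ICCatalan

open PEquiv Fin

variable {m : ℕ} {i : Fin m} {F : Finset (Fin (m + 1))}

theorem fixAndMove_mem_IC (hz : i.castSucc ∉ F) (hy : i.succ ∉ F) :
    fixAndMove F i.succ i.castSucc ∈ IC (m + 1) := by
  refine ⟨fun x₁ x₂ y₁ y₂ h₁ h₂ hle => ?_, fun x y h => ?_⟩
  · rw [fixAndMove_eq_some_iff hz hy] at h₁ h₂
    rcases h₁ with ⟨rfl, rfl⟩ | ⟨hx₁, rfl⟩ <;> rcases h₂ with ⟨rfl, rfl⟩ | ⟨hx₂, rfl⟩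
    · exact le_rfl
    · exact castSucc_lt_succ.le.trans hle
    · exact le_castSucc_iff.2 (lt_of_le_of_ne hle (ne_of_mem_of_not_mem hx₁ hy))
    · exact hle
  · rw [fixAndMove_eq_some_iff hz hy] at h
    rcases h with ⟨rfl, rfl⟩ | ⟨-, rfl⟩
    · exact castSucc_lt_succ.le
    · exact le_rfl

theorem fixAndMove_isEssential (hz : i.castSucc ∉ F) (hy : i.succ ∉ F) :
    IsEssential (fixAndMove F i.succ i.castSucc) := by
  refine ⟨i.succ, i.castSucc, (fixAndMove_eq_some_iff hz hy).2 (.inl ⟨rfl, rfl⟩), by simp,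
    fun x w h hw => ?_⟩
  rcases (fixAndMove_eq_some_iff hz hy).1 h with ⟨rfl, -⟩ | ⟨-, rfl⟩
  · rfl
  · exact absurd rfl hw

theorem IsEssential.exists_eq_fixAndMove {α : PT (m + 1)} (h : IsEssential α) :
    ∃ (i : Fin m) (F : Finset (Fin (m + 1))), i.castSucc ∉ F ∧ i.succ ∉ F ∧
      α = fixAndMove F i.succ i.castSucc := by
  obtain ⟨y, z, hyz, hzy, hmoved⟩ := h
  obtain ⟨i, rfl, rfl⟩ : ∃ i : Fin m, i.succ = y ∧ i.castSucc = z :=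
    ⟨⟨z, by omega⟩, Fin.ext (by simp [hzy]), rfl⟩
  set F := Finset.univ.filter fun x => α x = some x
  have hz : i.castSucc ∉ F := fun hmem =>
    castSucc_lt_succ.ne' (α.inj hyz (by simpa [F] using hmem))
  have hy : i.succ ∉ F := by simp [F, hyz, castSucc_lt_succ.ne]
  refine ⟨i, F, hz, hy, PEquiv.ext fun x => Option.ext fun w => ?_⟩
  rw [fixAndMove_eq_some_iff hz hy]
  constructor
  · intro hxw
    by_cases hwx : w = x
    · exact .inr ⟨by simpa [F, hwx] using hxw, hwx⟩
    · obtain rfl := hmoved x w hxw hwx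
      exact .inl ⟨rfl, Option.some_injective _ (hxw.symm.trans hyz)⟩
  · rintro (⟨rfl, rfl⟩ | ⟨hx, rfl⟩)
    · exact hyz
    · simpa [F] using hx

def essentialData (m : ℕ) : Finset (Σ _ : Fin m, Finset (Fin (m + 1))) :=
  Finset.univ.sigma fun i => ({i.castSucc, i.succ}ᶜ : Finset (Fin (m + 1))).powerset

theorem mem_essentialData {p : Σ _ : Fin m, Finset (Fin (m + 1))} :
    p ∈ essentialData m ↔ p.1.castSucc ∉ p.2 ∧ p.1.succ ∉ p.2 := by
  simp only [essentialData, Finset.mem_sigma, Finset.mem_univ, Finset.mem_powerset,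
    Finset.subset_compl_iff_disjoint_right, Finset.disjoint_insert_right,
    Finset.disjoint_singleton_right, true_and]

theorem card_essentialData : (essentialData m).card = m * 2 ^ (m - 1) := by
  simp only [essentialData, Finset.card_sigma, Finset.card_powerset, Finset.card_compl,
    Finset.card_pair castSucc_lt_succ.ne, Fintype.card_fin, Finset.sum_const, Finset.card_univ,
    smul_eq_mul]
  rfl

noncomputable def essentialOf (p : Σ _ : Fin m, Finset (Fin (m + 1))) : PT (m + 1) :=
  fixAndMove p.2 p.1.succ p.1.castSucc

theorem injOn_essentialOf : Set.InjOn (essentialOf (m := m)) (essentialData m) := by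
  rintro ⟨i, F⟩ hp ⟨j, G⟩ hq heq
  obtain ⟨hiF, hiF'⟩ := mem_essentialData.1 hp
  obtain ⟨hjG, hjG'⟩ := mem_essentialData.1 hq
  have hmoved : essentialOf ⟨j, G⟩ i.succ = some i.castSucc := by
    rw [← heq]; exact (fixAndMove_eq_some_iff hiF hiF').2 (.inl ⟨rfl, rfl⟩)
  obtain rfl : i = j := by
    rcases (fixAndMove_eq_some_iff hjG hjG').1 hmoved with ⟨h, -⟩ | ⟨-, h⟩
    · exact succ_injective _ h
    · exact absurd h castSucc_lt_succ.ne
  have hFG : F = G := Finset.ext fun x => by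
    rw [← fixAndMove_eq_some_self_iff castSucc_lt_succ.ne hiF hiF',
      ← fixAndMove_eq_some_self_iff castSucc_lt_succ.ne hjG hjG']
    exact Eq.to_iff (congrArg (· x = some x) heq)
  rw [hFG]

theorem setOf_isEssential_eq_image :
    {α : PT (m + 1) | α ∈ IC (m + 1) ∧ IsEssential α} = essentialOf '' essentialData m := by
  ext α
  constructor
  · rintro ⟨-, hα⟩
    obtain ⟨i, F, hz, hy, rfl⟩ := hα.exists_eq_fixAndMove
    exact ⟨⟨i, F⟩, mem_essentialData.2 ⟨hz, hy⟩, rfl⟩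
  · rintro ⟨⟨i, F⟩, hp, rfl⟩
    obtain ⟨hz, hy⟩ := mem_essentialData.1 hp
    exact ⟨fixAndMove_mem_IC hz hy, fixAndMove_isEssential hz hy⟩

theorem stmt13_general (n : ℕ) :
    {α : PT n | α ∈ IC n ∧ IsEssential α}.ncard = (n - 1) * 2 ^ (n - 2) := by
  obtain _ | m := n
  · simp [IsEssential]
  · rw [setOf_isEssential_eq_image, injOn_essentialOf.ncard_image,
      Set.ncard_coe_finset, card_essentialData]
    rfl

/-- for `n ≥ 2`, the total number of essential elements of `IC_n` is
`(n-1)·2^(n-2)`. -/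
theorem stmt13 (n : ℕ) (hn : 2 ≤ n) :
    {α : PT n | α ∈ IC n ∧ IsEssential α}.ncard = (n - 1) * 2 ^ (n - 2) :=
  stmt13_general n

end ICCatalan
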